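/- arXiv:1907.06961 — 2 statements merged into one kernel-verified Lean document; each statement's English description precedes it below -/
import Mathlib

section
/- If f : [0, x_f] → ℝ is continuous, K : [0,x_f]×[0,x_f] → ℝ is continuous, and F : ℝ → ℝ is Lipschitz continuous, then the nonlinear Volterra integral equation of the second kind y(x) = f(x) + ∫₀ˣ K(x,t) F(y(t)) dt has a unique continuous solution y on [0, x_f]. -/
open Set MeasureTheory intervalIntegral Function BoundedContinuousFunction

namespace VolterraAux

variable (xf : ℝ)

/-- clamp to `[0, xf]`. -/
noncomputable def cl (x : ℝ) : ℝ := max 0 (min x xf)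

lemma cl_mem (hxf : 0 ≤ xf) (x : ℝ) : cl xf x ∈ Icc 0 xf :=
  ⟨le_max_left _ _, max_le hxf (min_le_right _ _)⟩

lemma cl_eq {x : ℝ} (hx : x ∈ Icc 0 xf) : cl xf x = x := by
  simp [cl, min_eq_left hx.2, max_eq_right hx.1]

lemma cl_cont : Continuous (cl xf) :=
  continuous_const.max (continuous_id.min continuous_const)

variable (f : ℝ → ℝ) (K : ℝ → ℝ → ℝ) (F : ℝ → ℝ)

/-- The Picard operator for the Volterra equation, on functions `ℝ → ℝ`, using clamping. -/
noncomputable def G (y : ℝ → ℝ) (x : ℝ) : ℝ :=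
  f (cl xf x) + ∫ t in (0:ℝ)..(cl xf x), K (cl xf x) (cl xf t) * F (y (cl xf t))

variable {xf f K F}

lemma G_cont (hxf : 0 ≤ xf) (hf : ContinuousOn f (Set.Icc 0 xf))
    (hK : ContinuousOn (fun p : ℝ × ℝ => K p.1 p.2) (Set.Icc 0 xf ×ˢ Set.Icc 0 xf))
    (hF : Continuous F) {y : ℝ → ℝ} (hy : Continuous y) :
    Continuous (G xf f K F y) := by
  have hKc : Continuous fun p : ℝ × ℝ => K (cl xf p.1) (cl xf p.2) :=
    hK.comp_continuous
      (((cl_cont xf).comp continuous_fst).prodMk ((cl_cont xf).comp continuous_snd))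
      (fun p => ⟨cl_mem xf hxf _, cl_mem xf hxf _⟩)
  have hΦ : Continuous
      (Function.uncurry fun x t => K (cl xf x) (cl xf t) * F (y (cl xf t))) :=
    hKc.mul (hF.comp (hy.comp ((cl_cont xf).comp continuous_snd)))
  have h2 : Continuous fun x => ∫ t in (0:ℝ)..(cl xf x),
      K (cl xf x) (cl xf t) * F (y (cl xf t)) :=
    continuous_parametric_intervalIntegral_of_continuous hΦ (cl_cont xf)
  exact (hf.comp_continuous (cl_cont xf) (cl_mem xf hxf)).add h2

lemma G_clamp (hxf : 0 ≤ xf) (y : ℝ → ℝ) (x : ℝ) :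
    G xf f K F y (cl xf x) = G xf f K F y x := by
  unfold G
  rw [cl_eq xf (cl_mem xf hxf x)]

lemma G_bound (hxf : 0 ≤ xf) (hf : ContinuousOn f (Set.Icc 0 xf))
    (hK : ContinuousOn (fun p : ℝ × ℝ => K p.1 p.2) (Set.Icc 0 xf ×ˢ Set.Icc 0 xf))
    (hF : Continuous F) {y : ℝ → ℝ} (hy : Continuous y) :
    ∃ C, ∀ x, ‖G xf f K F y x‖ ≤ C := by
  obtain ⟨C, hC⟩ := isCompact_Icc.exists_bound_of_continuousOn
    (G_cont hxf hf hK hF hy).continuousOn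
  exact ⟨C, fun x => by rw [← G_clamp hxf]; exact hC _ (cl_mem xf hxf x)⟩

/-- The Picard operator as a map of bounded continuous functions. -/
noncomputable def T (hxf : 0 ≤ xf) (hf : ContinuousOn f (Set.Icc 0 xf))
    (hK : ContinuousOn (fun p : ℝ × ℝ => K p.1 p.2) (Set.Icc 0 xf ×ˢ Set.Icc 0 xf))
    (hF : Continuous F) (y : ℝ →ᵇ ℝ) : ℝ →ᵇ ℝ :=
  BoundedContinuousFunction.ofNormedAddCommGroup (G xf f K F y)
    (G_cont hxf hf hK hF y.continuous)
    (G_bound hxf hf hK hF y.continuous).choose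
    (G_bound hxf hf hK hF y.continuous).choose_spec

lemma T_apply (hxf : 0 ≤ xf) (hf : ContinuousOn f (Set.Icc 0 xf))
    (hK : ContinuousOn (fun p : ℝ × ℝ => K p.1 p.2) (Set.Icc 0 xf ×ˢ Set.Icc 0 xf))
    (hF : Continuous F) (y : ℝ →ᵇ ℝ) (x : ℝ) :
    T hxf hf hK hF y x = G xf f K F y x := rfl

end VolterraAux

open VolterraAux

/-- Existence and uniqueness of a continuous solution of the nonlinear
Volterra integral equation of the second kind
`y x = f x + ∫ t in 0..x, K x t * F (y t)` on `[0, xf]`,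
with `f`, `K` continuous and `F` Lipschitz. -/
theorem volterra_existence_uniqueness
    (xf : ℝ) (hxf : 0 ≤ xf)
    (f : ℝ → ℝ) (hf : ContinuousOn f (Set.Icc 0 xf))
    (K : ℝ → ℝ → ℝ)
    (hK : ContinuousOn (fun p : ℝ × ℝ => K p.1 p.2) (Set.Icc 0 xf ×ˢ Set.Icc 0 xf))
    (F : ℝ → ℝ) (L : NNReal) (hF : LipschitzWith L F) :
    ∃ y : ℝ → ℝ,
      (ContinuousOn y (Set.Icc 0 xf) ∧
        ∀ x ∈ Set.Icc 0 xf, y x = f x + ∫ t in (0:ℝ)..x, K x t * F (y t)) ∧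
      ∀ z : ℝ → ℝ,
        (ContinuousOn z (Set.Icc 0 xf) ∧
          ∀ x ∈ Set.Icc 0 xf, z x = f x + ∫ t in (0:ℝ)..x, K x t * F (z t)) →
        Set.EqOn y z (Set.Icc 0 xf) := by
  classical
  have hFc : Continuous F := hF.continuous
  set T : (ℝ →ᵇ ℝ) → (ℝ →ᵇ ℝ) := VolterraAux.T hxf hf hK hFc with hT
  -- a uniform bound on `K` over the compact square
  obtain ⟨M0, hM0⟩ := (isCompact_Icc.prod isCompact_Icc).exists_bound_of_continuousOn hK
  set M : ℝ := max M0 0 with hMdef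
  have hMnn : 0 ≤ M := le_max_right _ _
  have hM : ∀ s ∈ Icc 0 xf, ∀ t ∈ Icc 0 xf, |K s t| ≤ M := fun s hs t ht =>
    le_trans (by simpa using hM0 (s, t) ⟨hs, ht⟩) (le_max_left _ _)
  have hLnn : (0:ℝ) ≤ (L : ℝ) := L.coe_nonneg
  -- the key iterated estimate on [0, xf]
  have key : ∀ n : ℕ, ∀ y z : ℝ →ᵇ ℝ, ∀ x ∈ Icc 0 xf,
      |T^[n] y x - T^[n] z x| ≤ (M * L) ^ n * x ^ n / n.factorial * dist y z := by
    intro n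
    induction n with
    | zero =>
      intro y z x hx
      simpa [Real.dist_eq] using
        BoundedContinuousFunction.dist_coe_le_dist (f := y) (g := z) x
    | succ n ih =>
      intro y z x hx
      have hx0 : (0:ℝ) ≤ x := hx.1
      set u : ℝ →ᵇ ℝ := T^[n] y with hu
      set v : ℝ →ᵇ ℝ := T^[n] z with hv
      have hrw : T^[n+1] y = T u := by rw [Function.iterate_succ_apply']
      have hrw' : T^[n+1] z = T v := by rw [Function.iterate_succ_apply']
      rw [hrw, hrw']
      have hKx : Continuous fun t => K x (cl xf t) :=
        hK.comp_continuous (continuous_const.prodMk (cl_cont xf))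
          (fun t => ⟨hx, cl_mem xf hxf t⟩)
      have hw1 : Continuous fun t => K x (cl xf t) * F (u (cl xf t)) :=
        hKx.mul (hFc.comp (u.continuous.comp (cl_cont xf)))
      have hw2 : Continuous fun t => K x (cl xf t) * F (v (cl xf t)) :=
        hKx.mul (hFc.comp (v.continuous.comp (cl_cont xf)))
      have h1 : IntervalIntegrable (fun t => K x (cl xf t) * F (u (cl xf t))) volume 0 x :=
        hw1.intervalIntegrable _ _
      have h2 : IntervalIntegrable (fun t => K x (cl xf t) * F (v (cl xf t))) volume 0 x :=
        hw2.intervalIntegrable _ _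
      set c : ℝ := (M * L) ^ (n + 1) * dist y z / n.factorial with hc
      have hTuv : T u x - T v x = ∫ t in (0:ℝ)..x,
          (K x (cl xf t) * F (u (cl xf t)) - K x (cl xf t) * F (v (cl xf t))) := by
        rw [intervalIntegral.integral_sub h1 h2]
        show G xf f K F u x - G xf f K F v x = _
        unfold VolterraAux.G
        rw [cl_eq xf hx]
        ring
      calc |T u x - T v x|
          = |∫ t in (0:ℝ)..x,
              (K x (cl xf t) * F (u (cl xf t)) - K x (cl xf t) * F (v (cl xf t)))| := by
            rw [hTuv]
        _ ≤ ∫ t in (0:ℝ)..x,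
              |K x (cl xf t) * F (u (cl xf t)) - K x (cl xf t) * F (v (cl xf t))| := by
            simpa [Real.norm_eq_abs] using
              intervalIntegral.norm_integral_le_integral_norm
                (f := fun t => K x (cl xf t) * F (u (cl xf t))
                  - K x (cl xf t) * F (v (cl xf t))) (μ := volume) hx0
        _ ≤ ∫ t in (0:ℝ)..x, c * t ^ n := by
            apply intervalIntegral.integral_mono_on hx0
              ((hw1.sub hw2).abs.intervalIntegrable _ _)
              ((continuous_const.mul (continuous_pow n)).intervalIntegrable _ _)
            intro t ht
            have htI : t ∈ Icc 0 xf := ⟨ht.1, ht.2.trans hx.2⟩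
            have hclt : cl xf t = t := cl_eq xf htI
            show |K x (cl xf t) * F (u (cl xf t)) - K x (cl xf t) * F (v (cl xf t))| ≤ c * t ^ n
            rw [← mul_sub, abs_mul, hclt]
            have h3 : |K x t| ≤ M := hM x hx t htI
            have h4 : |F (u t) - F (v t)| ≤ (L : ℝ) * |u t - v t| := by
              have := hF.dist_le_mul (u t) (v t)
              simpa [Real.dist_eq] using this
            have h5 : |u t - v t| ≤ (M * L) ^ n * t ^ n / n.factorial * dist y z :=
              ih y z t htI
            have h6 : |F (u t) - F (v t)|
                ≤ (L : ℝ) * ((M * L) ^ n * t ^ n / n.factorial * dist y z) :=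
              h4.trans (mul_le_mul_of_nonneg_left h5 hLnn)
            calc |K x t| * |F (u t) - F (v t)|
                ≤ M * ((L : ℝ) * ((M * L) ^ n * t ^ n / n.factorial * dist y z)) :=
                  mul_le_mul h3 h6 (abs_nonneg _) hMnn
              _ = c * t ^ n := by rw [hc, pow_succ]; ring
        _ = c * (x ^ (n + 1) / (n + 1)) := by
            rw [intervalIntegral.integral_const_mul, integral_pow]
            norm_num
        _ = (M * L) ^ (n + 1) * x ^ (n + 1) / (n + 1).factorial * dist y z := by
            rw [hc, Nat.factorial_succ, Nat.cast_mul, Nat.cast_add, Nat.cast_one]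
            have hfac : (n.factorial : ℝ) ≠ 0 := Nat.cast_ne_zero.2 n.factorial_ne_zero
            have hn1 : ((n : ℝ) + 1) ≠ 0 := by positivity
            field_simp
  -- clamping invariance of `T` and its iterates
  have Tclamp : ∀ w : ℝ →ᵇ ℝ, ∀ x : ℝ, T w (cl xf x) = T w x := fun w x =>
    G_clamp hxf (⇑w) x
  have iter_clamp : ∀ m : ℕ, ∀ w : ℝ →ᵇ ℝ, ∀ x : ℝ,
      T^[m+1] w (cl xf x) = T^[m+1] w x := by
    intro m w x
    rw [Function.iterate_succ_apply']
    exact Tclamp _ x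
  -- choose `n` making `T^[n]` a contraction
  obtain ⟨N, hN⟩ := Filter.eventually_atTop.1
    ((FloorSemiring.tendsto_pow_div_factorial_atTop (M * L * xf)).eventually
      (gt_mem_nhds one_pos))
  set n : ℕ := N + 1 with hn
  have hsmall : (M * L * xf) ^ n / n.factorial < 1 := hN n (Nat.le_succ N)
  have hκnn : (0:ℝ) ≤ (M * L) ^ n * xf ^ n / n.factorial := by positivity
  set κ : NNReal := Real.toNNReal ((M * L) ^ n * xf ^ n / n.factorial) with hκ
  have hκcoe : (κ : ℝ) = (M * L) ^ n * xf ^ n / n.factorial := Real.coe_toNNReal _ hκnn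
  have hκ1 : κ < 1 := by
    rw [← NNReal.coe_lt_coe, hκcoe, NNReal.coe_one]
    calc (M * L) ^ n * xf ^ n / n.factorial
        = (M * L * xf) ^ n / n.factorial := by rw [← mul_pow]
      _ < 1 := hsmall
  have hlip : LipschitzWith κ (T^[n]) := by
    apply LipschitzWith.of_dist_le_mul
    intro y z
    rw [BoundedContinuousFunction.dist_le (by positivity)]
    intro x
    rw [Real.dist_eq, ← iter_clamp N y x, ← iter_clamp N z x]
    have h := key n y z (cl xf x) (cl_mem xf hxf x)
    refine h.trans ?_
    rw [hκcoe]
    have hcx := cl_mem xf hxf x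
    gcongr <;> first
      | exact hcx.1
      | exact hcx.2
  have hCW : ContractingWith κ (T^[n]) := ⟨hκ1, hlip⟩
  set y₀ : ℝ →ᵇ ℝ := hCW.fixedPoint (T^[n]) with hy₀
  have hfixT : T y₀ = y₀ := hCW.isFixedPt_fixedPoint_iterate
  refine ⟨⇑y₀, ⟨y₀.continuous.continuousOn, ?_⟩, ?_⟩
  · intro x hx
    conv_lhs => rw [← hfixT]
    show G xf f K F (⇑y₀) x = f x + ∫ t in (0:ℝ)..x, K x t * F (y₀ t)
    unfold VolterraAux.G
    rw [cl_eq xf hx]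
    congr 1
    apply intervalIntegral.integral_congr
    intro t ht
    rw [uIcc_of_le hx.1] at ht
    show K x (cl xf t) * F (y₀ (cl xf t)) = K x t * F (y₀ t)
    rw [cl_eq xf ⟨ht.1, ht.2.trans hx.2⟩]
  · rintro z ⟨hzc, hze⟩
    have hzcl : Continuous (z ∘ cl xf) :=
      hzc.comp_continuous (cl_cont xf) (cl_mem xf hxf)
    obtain ⟨C, hC⟩ := isCompact_Icc.exists_bound_of_continuousOn hzc
    set z' : ℝ →ᵇ ℝ := BoundedContinuousFunction.ofNormedAddCommGroup (z ∘ cl xf) hzcl C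
      (fun x => hC _ (cl_mem xf hxf x)) with hz'
    have hz'fix : T z' = z' := by
      ext x
      show G xf f K F (⇑z') x = z (cl xf x)
      unfold VolterraAux.G
      rw [hze (cl xf x) (cl_mem xf hxf x)]
      congr 1
      apply intervalIntegral.integral_congr
      intro t ht
      rw [uIcc_of_le (cl_mem xf hxf x).1] at ht
      have h1 : cl xf t = t := cl_eq xf ⟨ht.1, ht.2.trans (cl_mem xf hxf x).2⟩
      show K (cl xf x) (cl xf t) * F (z (cl xf (cl xf t))) = K (cl xf x) t * F (z t)
      rw [cl_eq xf (cl_mem xf hxf t), h1]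
    have hz'eq : z' = y₀ :=
      hCW.fixedPoint_unique (Function.IsFixedPt.iterate hz'fix n)
    intro x hx
    show y₀ x = z x
    rw [← hz'eq]
    show z (cl xf x) = z x
    rw [cl_eq xf hx]
end

section
/- Under the hypotheses that f, K are continuous and F is Lipschitz, the successive approximations defined by u₀(x) = f(x) and u_{k+1}(x) = f(x) + ∫₀ˣ K(x,t) F(u_k(t)) dt converge uniformly on [0, x_f] to the unique continuous solution y of the Volterra equation y(x) = f(x) + ∫₀ˣ K(x,t) F(y(t)) dt. -/
open Set MeasureTheory Filter

lemma tietze_ext {X : Type*} [TopologicalSpace X] [NormalSpace X] {s : Set X}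
    (hs : IsClosed s) {h : X → ℝ} (hh : ContinuousOn h s) :
    ∃ g : X → ℝ, Continuous g ∧ ∀ x ∈ s, g x = h x := by
  obtain ⟨g, hg⟩ := ContinuousMap.exists_restrict_eq (Y := ℝ) hs
    ⟨s.restrict h, continuousOn_iff_continuous_restrict.mp hh⟩
  refine ⟨g, g.continuous, fun x hx => ?_⟩
  have := DFunLike.congr_fun hg (⟨x, hx⟩ : s)
  exact this

/-- Continuity of the parametric primitive on the interval. -/
lemma volterra_cont (xf : ℝ) (hxf : 0 ≤ xf)
    (K : ℝ → ℝ → ℝ)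
    (hK : ContinuousOn (fun p : ℝ × ℝ => K p.1 p.2) (Set.Icc 0 xf ×ˢ Set.Icc 0 xf))
    (h : ℝ → ℝ) (hh : ContinuousOn h (Set.Icc 0 xf)) :
    ContinuousOn (fun x => ∫ t in (0:ℝ)..x, K x t * h t) (Set.Icc 0 xf) := by
  obtain ⟨K', hK'c, hK'eq⟩ := tietze_ext (isClosed_Icc.prod isClosed_Icc) hK
  obtain ⟨h', hh'c, hh'eq⟩ := tietze_ext isClosed_Icc hh
  have hcont : Continuous fun p : ℝ × ℝ => ∫ t in (0:ℝ)..p.2, K' (p.1, t) * h' t := by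
    exact intervalIntegral.continuous_parametric_primitive_of_continuous (μ := volume)
      (f := fun x t => K' (x, t) * h' t) (a₀ := 0)
      ((hK'c.comp (by fun_prop)).mul (hh'c.comp continuous_snd))
  have h2 : ContinuousOn (fun x : ℝ => ∫ t in (0:ℝ)..x, K' (x, t) * h' t) (Set.Icc 0 xf) :=
    (hcont.comp (continuous_id.prodMk continuous_id)).continuousOn
  apply h2.congr
  intro x hx
  apply intervalIntegral.integral_congr
  intro t ht
  rw [Set.uIcc_of_le hx.1] at ht
  have htS : t ∈ Set.Icc 0 xf := ⟨ht.1, ht.2.trans hx.2⟩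
  show K x t * h t = K' (x, t) * h' t
  rw [hK'eq (x, t) ⟨hx, htS⟩, hh'eq t htS]

/-- The successive approximations `u 0 = f`,
`u (k+1) x = f x + ∫ t in 0..x, K x t * F (u k t)` converge uniformly on
`[0, xf]` to the unique continuous solution of the Volterra equation. -/
theorem sam_converges_uniformly
    (xf : ℝ) (hxf : 0 ≤ xf)
    (f : ℝ → ℝ) (hf : ContinuousOn f (Set.Icc 0 xf))
    (K : ℝ → ℝ → ℝ)
    (hK : ContinuousOn (fun p : ℝ × ℝ => K p.1 p.2) (Set.Icc 0 xf ×ˢ Set.Icc 0 xf))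
    (F : ℝ → ℝ) (L : NNReal) (hF : LipschitzWith L F)
    (u : ℕ → ℝ → ℝ)
    (hu0 : ∀ x, u 0 x = f x)
    (hrec : ∀ k, ∀ x ∈ Set.Icc 0 xf,
      u (k + 1) x = f x + ∫ t in (0:ℝ)..x, K x t * F (u k t)) :
    ∃ y : ℝ → ℝ,
      ContinuousOn y (Set.Icc 0 xf) ∧
      (∀ x ∈ Set.Icc 0 xf, y x = f x + ∫ t in (0:ℝ)..x, K x t * F (y t)) ∧
      (∀ z : ℝ → ℝ,
        ContinuousOn z (Set.Icc 0 xf) →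
        (∀ x ∈ Set.Icc 0 xf, z x = f x + ∫ t in (0:ℝ)..x, K x t * F (z t)) →
        Set.EqOn y z (Set.Icc 0 xf)) ∧
      TendstoUniformlyOn (fun k => u k) y Filter.atTop (Set.Icc 0 xf) := by
  set S := Set.Icc (0:ℝ) xf with hS
  -- bound on K
  obtain ⟨M, hM⟩ := ((isCompact_Icc.prod isCompact_Icc).exists_bound_of_continuousOn hK :
    ∃ C, ∀ p ∈ S ×ˢ S, ‖K p.1 p.2‖ ≤ C)
  have hMnn : 0 ≤ M :=
    (norm_nonneg (K 0 0)).trans (hM (0, 0) ⟨⟨le_rfl, hxf⟩, le_rfl, hxf⟩)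
  have hMK : ∀ x ∈ S, ∀ t ∈ S, |K x t| ≤ M := fun x hx t ht => hM (x, t) ⟨hx, ht⟩
  -- interval integrability
  have hint : ∀ (h : ℝ → ℝ), ContinuousOn h S → ∀ x ∈ S,
      IntervalIntegrable (fun t => K x t * F (h t)) volume 0 x := by
    intro h hh x hx
    apply ContinuousOn.intervalIntegrable
    rw [Set.uIcc_of_le hx.1]
    have hsub : Set.Icc (0:ℝ) x ⊆ S := Set.Icc_subset_Icc le_rfl hx.2
    apply ContinuousOn.mul
    · exact hK.comp ((continuous_const.prodMk continuous_id).continuousOn)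
        (fun t ht => ⟨hx, hsub ht⟩)
    · exact hF.continuous.comp_continuousOn (hh.mono hsub)
  -- continuity of all iterates
  have hucont : ∀ k, ContinuousOn (u k) S := by
    intro k
    induction k with
    | zero => exact hf.congr fun x _ => hu0 x
    | succ k ih =>
      exact (hf.add (volterra_cont xf hxf K hK (fun t => F (u k t))
        (hF.continuous.comp_continuousOn ih))).congr fun x hx => hrec k x hx
  -- the key step estimate
  have step : ∀ (B : ℝ), 0 ≤ B → ∀ (k : ℕ) (p q : ℝ → ℝ), ContinuousOn p S → ContinuousOn q S →
      (∀ t ∈ S, |p t - q t| ≤ B * t ^ k / (k.factorial : ℝ)) →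
      ∀ x ∈ S, |(∫ t in (0:ℝ)..x, K x t * F (p t)) - ∫ t in (0:ℝ)..x, K x t * F (q t)|
        ≤ (M * (L : ℝ) * B) * x ^ (k + 1) / ((k + 1).factorial : ℝ) := by
    intro B hB k p q hp hq hpq x hx
    have h1 := hint p hp x hx
    have h2 := hint q hq x hx
    rw [← intervalIntegral.integral_sub h1 h2]
    have hsub : Set.Icc (0:ℝ) x ⊆ S := Set.Icc_subset_Icc le_rfl hx.2
    have habs := intervalIntegral.abs_integral_le_integral_abs
      (f := fun t => K x t * F (p t) - K x t * F (q t)) (μ := volume) hx.1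
    refine habs.trans ?_
    have hmono : (∫ t in (0:ℝ)..x, |K x t * F (p t) - K x t * F (q t)|)
        ≤ ∫ t in (0:ℝ)..x, (M * (L : ℝ) * B / (k.factorial : ℝ)) * t ^ k := by
      apply intervalIntegral.integral_mono_on hx.1 ((h1.sub h2).abs)
      · exact (Continuous.intervalIntegrable (by continuity) 0 x)
      · intro t ht
        have htS : t ∈ S := hsub ht
        have hKb : |K x t| ≤ M := hMK x hx t htS
        have hFd : |F (p t) - F (q t)| ≤ (L : ℝ) * |p t - q t| := by
          have := hF.dist_le_mul (p t) (q t)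
          simpa [Real.dist_eq] using this
        calc |K x t * F (p t) - K x t * F (q t)| = |K x t| * |F (p t) - F (q t)| := by
              rw [← mul_sub, abs_mul]
          _ ≤ M * ((L : ℝ) * (B * t ^ k / (k.factorial : ℝ))) := by
              apply mul_le_mul hKb (hFd.trans ?_) (abs_nonneg _) hMnn
              exact mul_le_mul_of_nonneg_left (hpq t htS) L.2
          _ = (M * (L : ℝ) * B / (k.factorial : ℝ)) * t ^ k := by ring
    refine hmono.trans ?_
    rw [intervalIntegral.integral_const_mul, integral_pow]
    have hk : ((k.factorial : ℝ)) ≠ 0 := Nat.cast_ne_zero.mpr k.factorial_pos.ne'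
    have hk1 : ((k:ℝ) + 1) ≠ 0 := by positivity
    rw [Nat.factorial_succ]
    push_cast
    rw [zero_pow (Nat.succ_ne_zero k)]
    apply le_of_eq
    field_simp
    ring
  -- bound on the first difference
  obtain ⟨C0, hC0⟩ := isCompact_Icc.exists_bound_of_continuousOn ((hucont 1).sub (hucont 0))
  set C := max C0 0 with hC
  have hCnn : 0 ≤ C := le_max_right _ _
  have hC1 : ∀ x ∈ S, |u 1 x - u 0 x| ≤ C := fun x hx =>
    (le_max_left C0 0).trans' (by simpa [Real.norm_eq_abs] using hC0 x hx)
  -- iterated bound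
  have hbound : ∀ k, ∀ x ∈ S, |u (k + 1) x - u k x|
      ≤ C * (M * (L : ℝ)) ^ k * x ^ k / (k.factorial : ℝ) := by
    intro k
    induction k with
    | zero => intro x hx; simpa using hC1 x hx
    | succ k ih =>
      intro x hx
      have hB : 0 ≤ C * (M * (L : ℝ)) ^ k := by positivity
      have ih' : ∀ t ∈ S, |u (k + 1) t - u k t|
          ≤ (C * (M * (L : ℝ)) ^ k) * t ^ k / (k.factorial : ℝ) := ih
      have := step (C * (M * (L : ℝ)) ^ k) hB k (u (k + 1)) (u k)
        (hucont (k + 1)) (hucont k) ih' x hx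
      rw [hrec (k + 1) x hx, hrec k x hx, add_sub_add_left_eq_sub]
      refine this.trans_eq ?_
      ring
  -- summability of the majorant series
  have hsum : Summable (fun n : ℕ => C * ((M * (L : ℝ) * xf) ^ n / (n.factorial : ℝ))) :=
    (Real.summable_pow_div_factorial (M * (L : ℝ) * xf)).mul_left C
  have hmaj : ∀ (n : ℕ), ∀ x ∈ S, ‖u (n + 1) x - u n x‖
      ≤ C * ((M * (L : ℝ) * xf) ^ n / (n.factorial : ℝ)) := by
    intro n x hx
    rw [Real.norm_eq_abs]
    calc |u (n + 1) x - u n x| ≤ C * (M * (L : ℝ)) ^ n * x ^ n / (n.factorial : ℝ) :=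
          hbound n x hx
      _ ≤ C * (M * (L : ℝ)) ^ n * xf ^ n / (n.factorial : ℝ) := by
          gcongr
          exacts [hx.1, hx.2]
      _ = C * ((M * (L : ℝ) * xf) ^ n / (n.factorial : ℝ)) := by
          rw [mul_pow]; ring
  have hTU0 : TendstoUniformlyOn
      (fun t x => ∑ n ∈ Finset.range t, (u (n + 1) x - u n x))
      (fun x => ∑' n, (u (n + 1) x - u n x)) atTop S :=
    tendstoUniformlyOn_tsum_nat hsum hmaj
  set y : ℝ → ℝ := fun x => (∑' n, (u (n + 1) x - u n x)) + f x with hy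
  have hux : ∀ (t : ℕ) (x : ℝ),
      u t x = (∑ n ∈ Finset.range t, (u (n + 1) x - u n x)) + f x := by
    intro t x
    rw [Finset.sum_range_sub (fun n => u n x), hu0]
    ring
  have hTU : TendstoUniformlyOn (fun k => u k) y atTop S := by
    rw [Metric.tendstoUniformlyOn_iff] at hTU0 ⊢
    intro ε hε
    filter_upwards [hTU0 ε hε] with t ht x hx
    have := ht x hx
    rw [hy]
    simpa [hux t x, dist_add_right] using this
  have hycont : ContinuousOn y S := hTU.continuousOn (Filter.Eventually.of_forall hucont).frequently
  -- y satisfies the equation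
  have heq : ∀ x ∈ S, y x = f x + ∫ t in (0:ℝ)..x, K x t * F (y t) := by
    intro x hx
    have h1 : Filter.Tendsto (fun k => u k x) atTop (nhds (y x)) := hTU.tendsto_at hx
    have h2 : Filter.Tendsto (fun k => u (k + 1) x) atTop (nhds (y x)) :=
      h1.comp (Filter.tendsto_add_atTop_nat 1)
    have h2' : Filter.Tendsto (fun k => f x + ∫ t in (0:ℝ)..x, K x t * F (u k t))
        atTop (nhds (y x)) := h2.congr fun k => hrec k x hx
    have h3 : Filter.Tendsto (fun k => ∫ t in (0:ℝ)..x, K x t * F (u k t))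
        atTop (nhds (∫ t in (0:ℝ)..x, K x t * F (y t))) := by
      rw [Metric.tendsto_atTop]
      intro ε hε
      have hδpos : 0 < M * (L : ℝ) * xf + 1 := by positivity
      set δ := ε / (M * (L : ℝ) * xf + 1) with hδ
      have hδ0 : 0 < δ := div_pos hε hδpos
      have hTU' := Metric.tendstoUniformlyOn_iff.mp hTU
      obtain ⟨N, hN⟩ := Filter.eventually_atTop.mp (hTU' δ hδ0)
      refine ⟨N, fun k hk => ?_⟩
      have hdk : ∀ t ∈ S, |u k t - y t| ≤ δ * t ^ 0 / ((0 : ℕ).factorial : ℝ) := by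
        intro t ht
        have := hN k hk t ht
        rw [Real.dist_eq, abs_sub_comm] at this
        simpa using this.le
      have hA := step δ hδ0.le 0 (u k) y (hucont k) hycont hdk x hx
      have hA' : M * (L : ℝ) * δ * x ^ (0 + 1) / (((0:ℕ) + 1).factorial : ℝ)
          = M * (L : ℝ) * x * δ := by norm_num; ring
      have hB2 : M * (L : ℝ) * x * δ ≤ M * (L : ℝ) * xf * δ := by
        have h0 : (0:ℝ) ≤ M * (L : ℝ) := by positivity
        exact mul_le_mul_of_nonneg_right (mul_le_mul_of_nonneg_left hx.2 h0) hδ0.le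
      have hC2 : M * (L : ℝ) * xf * δ < ε := by
        have : M * (L : ℝ) * xf * δ < (M * (L : ℝ) * xf + 1) * δ := by nlinarith
        calc M * (L : ℝ) * xf * δ < (M * (L : ℝ) * xf + 1) * δ := this
          _ = ε := by rw [hδ]; field_simp
      rw [Real.dist_eq]
      calc |(∫ t in (0:ℝ)..x, K x t * F (u k t)) - ∫ t in (0:ℝ)..x, K x t * F (y t)|
          ≤ M * (L : ℝ) * δ * x ^ (0 + 1) / (((0:ℕ) + 1).factorial : ℝ) := hA
        _ = M * (L : ℝ) * x * δ := hA'
        _ ≤ M * (L : ℝ) * xf * δ := hB2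
        _ < ε := hC2
    exact tendsto_nhds_unique h2' (tendsto_const_nhds.add h3)
  -- uniqueness
  have huniq : ∀ z : ℝ → ℝ, ContinuousOn z S →
      (∀ x ∈ S, z x = f x + ∫ t in (0:ℝ)..x, K x t * F (z t)) → Set.EqOn y z S := by
    intro z hzc hzeq
    obtain ⟨D0, hD0⟩ := isCompact_Icc.exists_bound_of_continuousOn (hycont.sub hzc)
    set D := max D0 0 with hD
    have hDnn : 0 ≤ D := le_max_right _ _
    have hD1 : ∀ t ∈ S, |y t - z t| ≤ D := fun t ht =>
      (le_max_left D0 0).trans' (by simpa [Real.norm_eq_abs] using hD0 t ht)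
    have hzb : ∀ k, ∀ t ∈ S, |y t - z t| ≤ D * (M * (L : ℝ)) ^ k * t ^ k / (k.factorial : ℝ) := by
      intro k
      induction k with
      | zero => intro t ht; simpa using hD1 t ht
      | succ k ih =>
        intro t ht
        have hB : 0 ≤ D * (M * (L : ℝ)) ^ k := by positivity
        have ih' : ∀ s ∈ S, |y s - z s|
            ≤ (D * (M * (L : ℝ)) ^ k) * s ^ k / (k.factorial : ℝ) := ih
        have := step (D * (M * (L : ℝ)) ^ k) hB k y z hycont hzc ih' t ht
        rw [heq t ht, hzeq t ht, add_sub_add_left_eq_sub]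
        refine this.trans_eq ?_
        ring
    intro x hx
    have hlim : Filter.Tendsto (fun k : ℕ => D * ((M * (L : ℝ) * x) ^ k / (k.factorial : ℝ)))
        atTop (nhds 0) := by
      simpa using (FloorSemiring.tendsto_pow_div_factorial_atTop (M * (L : ℝ) * x)).const_mul D
    have hle : |y x - z x| ≤ 0 := by
      refine ge_of_tendsto hlim (Filter.Eventually.of_forall fun k => ?_)
      refine (hzb k x hx).trans_eq ?_
      rw [mul_pow]; ring
    have := abs_nonpos_iff.mp hle
    exact sub_eq_zero.mp this
  exact ⟨y, hycont, heq, huniq, hTU⟩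
end
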